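/- arXiv:2311.16255 — 3 statements merged into one kernel-verified Lean document; each statement's English description precedes it below -/
import Mathlib

section
/- There exists an absolute constant c > 0 such that for every squarefree positive integer N, every positive divisor ℓ of N, every g ∈ SL₂(ℝ), every δ ∈ (0,1] and every L > 0: if L ≤ c·min{ℓ^{−1/2}, ℓ^{−1}·H(g)^{−1}·δ^{−1/2}}, then R(ℓ;g) ∩ Ω⋆(δ,L) is empty. -/
open MeasureTheory Real Matrix Set

noncomputable section

/-- 2×2 real matrices. -/
abbrev M2 := Matrix (Fin 2) (Fin 2) ℝ

/-- The lattice R(ℓ) = { (a, b; c, d) : a, d ∈ ℤ, b ∈ (1/ℓ)ℤ, c ∈ (N/ℓ)ℤ }. -/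
def Rlat (N ℓ : ℕ) : Set M2 :=
  {γ | (∃ n : ℤ, γ 0 0 = (n : ℝ)) ∧ (∃ n : ℤ, γ 0 1 = (n : ℝ) / ℓ) ∧
       (∃ n : ℤ, γ 1 0 = (n : ℝ) * N / ℓ) ∧ (∃ n : ℤ, γ 1 1 = (n : ℝ))}

/-- The conjugated lattice R(ℓ;g) = g⁻¹ · R(ℓ) · g. -/
def Rconj (N ℓ : ℕ) (g : M2) : Set M2 := {γ | g * γ * g⁻¹ ∈ Rlat N ℓ}

/-- P(γ): half the sum of the squares of the four entries of γ. -/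
def Pfun (γ : M2) : ℝ := ((γ 0 0) ^ 2 + (γ 0 1) ^ 2 + (γ 1 0) ^ 2 + (γ 1 1) ^ 2) / 2

/-- Ω(δ,L) = {γ : P(γ) ≤ L² and P(γ) − det γ ≤ 2δL²}. -/
def OmegaSet (δ L : ℝ) : Set M2 := {γ | Pfun γ ≤ L ^ 2 ∧ Pfun γ - γ.det ≤ 2 * δ * L ^ 2}

/-- Ω⋆(δ,L): nonzero elements of Ω(δ,L). -/
def OmegaStar (δ L : ℝ) : Set M2 := {γ | γ ∈ OmegaSet δ L ∧ γ ≠ 0}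

/-- Ψ(δ,L) = {γ : P(γ) ≤ L² and P(γ) + det γ ≤ 2δL²}. -/
def PsiSet (δ L : ℝ) : Set M2 := {γ | Pfun γ ≤ L ^ 2 ∧ Pfun γ + γ.det ≤ 2 * δ * L ^ 2}

/-- Ψ⋆(δ,L): nonzero elements of Ψ(δ,L). -/
def PsiStar (δ L : ℝ) : Set M2 := {γ | γ ∈ PsiSet δ L ∧ γ ≠ 0}

/-- Möbius action of a 2×2 real matrix on a complex number. -/
def moebius (m : M2) (z : ℂ) : ℂ :=
  ((m 0 0 : ℂ) * z + (m 0 1 : ℂ)) / ((m 1 0 : ℂ) * z + (m 1 1 : ℂ))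

/-- A₀(N): determinant-one matrices of the form Q^{−1/2}·(Qa, b; Nc, Qd)
    with Q a positive divisor of N and a,b,c,d ∈ ℤ. -/
def AtkinLehner (N : ℕ) : Set M2 :=
  {σ | σ.det = 1 ∧ ∃ (Q : ℕ) (a b c d : ℤ), 0 < Q ∧ Q ∣ N ∧
     σ = (Real.sqrt Q)⁻¹ • !![(Q : ℝ) * a, (b : ℝ); (N : ℝ) * c, (Q : ℝ) * d]}

/-- H(g) = sup_{σ ∈ A₀(N)} Im(σ·(g·i)). -/
def Hgt (N : ℕ) (g : M2) : ℝ :=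
  sSup ((fun σ => (moebius σ (moebius g Complex.I)).im) '' AtkinLehner N)

/-!
Write `X = g γ g⁻¹ ∈ R(ℓ)`. Its trace is an integer and `ℓ · det X` is an integer, while both
are bounded by `P(γ) ≤ L²`; for small `L` they vanish, so `X` is a nonzero nilpotent element of
`R(ℓ)`. Its left kernel is spanned by a primitive integral vector `(V, -u)`, and squarefreeness of
`N` supplies an Atkin–Lehner element `σ` with bottom row `√Q · (V, -u)`, i.e. one sending the
cusp of `X` to `∞`. Then `σ X σ⁻¹ = (0, b; 0, 0)` with `ℓ b ∈ ℤ ∖ {0}`, and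
`2 P(γ) · Im(σ g · i)² = b²`. Since `Im(σ g · i) ≤ H(g)` this gives `2 P(γ) ℓ² H(g)² ≥ 1`,
whereas on `Ω(δ, L)` with `det γ = 0` one has `P(γ) ≤ 2 δ L²`, which is too small.
-/

lemma moebius_im {σ : M2} (hσ : σ.det = 1) (z : ℂ) :
    (moebius σ z).im = z.im / ((σ 1 0 * z.re + σ 1 1) ^ 2 + (σ 1 0 * z.im) ^ 2) := by
  rw [det_fin_two] at hσ
  rw [moebius, Complex.div_im]
  simp only [Complex.normSq_apply, Complex.add_re, Complex.add_im, Complex.mul_re,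
    Complex.mul_im, Complex.ofReal_re, Complex.ofReal_im]
  rw [← sub_div]
  congr 1
  · linear_combination z.im * hσ
  · ring

lemma moebius_mul (σ g : M2) {z : ℂ} (hz : (g 1 0 : ℂ) * z + g 1 1 ≠ 0) :
    moebius (σ * g) z = moebius σ (moebius g z) := by
  simp only [moebius, mul_apply, Fin.sum_univ_two, Complex.ofReal_add, Complex.ofReal_mul]
  rw [mul_div_assoc', div_add' _ _ _ hz, mul_div_assoc', div_add' _ _ _ hz,
    div_div_div_cancel_right₀ hz]
  congr 1 <;> ring

lemma moebius_I_im {h : M2} (hh : h.det = 1) :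
    (moebius h Complex.I).im = 1 / (h 1 0 ^ 2 + h 1 1 ^ 2) := by
  rw [moebius_im hh]
  simp only [Complex.I_re, Complex.I_im]
  ring_nf

lemma bottom_row_sq_add_sq_pos {h : M2} (hh : h.det = 1) : 0 < h 1 0 ^ 2 + h 1 1 ^ 2 := by
  rw [det_fin_two] at hh
  by_contra hle
  have h10 : h 1 0 = 0 := by nlinarith [sq_nonneg (h 1 0), sq_nonneg (h 1 1)]
  have h11 : h 1 1 = 0 := by nlinarith [sq_nonneg (h 1 0), sq_nonneg (h 1 1)]
  simp [h10, h11] at hh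

lemma moebius_moebius_I_im {σ g : M2} (hσ : σ.det = 1) (hg : g.det = 1) :
    (moebius σ (moebius g Complex.I)).im = 1 / ((σ * g) 1 0 ^ 2 + (σ * g) 1 1 ^ 2) := by
  have hz : (g 1 0 : ℂ) * Complex.I + g 1 1 ≠ 0 := by
    intro h0
    have h11 : g 1 1 = 0 := by simpa using congrArg Complex.re h0
    have h10 : g 1 0 = 0 := by simpa using congrArg Complex.im h0
    have := bottom_row_sq_add_sq_pos hg
    simp [h10, h11] at this
  rw [← moebius_mul σ g hz, moebius_I_im (by rw [det_mul, hσ, hg, one_mul])]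

lemma one_le_intCast_sq {n : ℤ} (hn : n ≠ 0) : (1 : ℝ) ≤ (n : ℝ) ^ 2 := by
  exact_mod_cast (one_le_sq_iff_one_le_abs n).mpr (Int.one_le_abs hn)

lemma one_mem_AtkinLehner (N : ℕ) : (1 : M2) ∈ AtkinLehner N :=
  ⟨det_one, 1, 1, 0, 0, 1, one_pos, one_dvd N, by simp [one_fin_two]⟩

lemma one_le_sq_bottom_row_of_mem_AtkinLehner {N : ℕ} (hN : 0 < N) {σ : M2}
    (hσ : σ ∈ AtkinLehner N) : 1 ≤ σ 1 0 ^ 2 ∨ (σ 1 0 = 0 ∧ 1 ≤ σ 1 1 ^ 2) := by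
  obtain ⟨hdet, Q, a, b, c, d, hQ, hQN, rfl⟩ := hσ
  have hQR : (0 : ℝ) < Q := by exact_mod_cast hQ
  have hsq : Real.sqrt Q ^ 2 = Q := Real.sq_sqrt hQR.le
  rw [det_fin_two] at hdet
  simp only [Matrix.smul_apply, of_apply, cons_val', cons_val_zero, cons_val_one,
    empty_val', cons_val_fin_one, smul_eq_mul] at hdet ⊢
  rcases eq_or_ne c 0 with rfl | hc
  · right
    refine ⟨by simp, ?_⟩
    have had : (Q : ℤ) * (a * d) = 1 := by
      have : (Q : ℝ) * (Q * (a * d)) = Q * 1 := by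
        field_simp at hdet
        linear_combination hdet + hsq
      exact_mod_cast mul_left_cancel₀ hQR.ne' this
    have hd : (1 : ℝ) ≤ (d : ℝ) ^ 2 := one_le_intCast_sq (by rintro rfl; simp at had)
    have hQ1 : (1 : ℝ) ≤ Q := by exact_mod_cast hQ
    rw [mul_pow, mul_pow, inv_pow, hsq]
    field_simp
    nlinarith
  · left
    have hc2 : (1 : ℝ) ≤ (c : ℝ) ^ 2 := one_le_intCast_sq hc
    have hQN' : (Q : ℝ) ≤ N := by exact_mod_cast Nat.le_of_dvd hN hQN
    have hN1 : (1 : ℝ) ≤ N := by exact_mod_cast hN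
    rw [mul_pow, mul_pow, inv_pow, hsq, le_inv_mul_iff₀ hQR]
    nlinarith

lemma moebius_im_le_of_mem_AtkinLehner {N : ℕ} (hN : 0 < N) {σ : M2}
    (hσ : σ ∈ AtkinLehner N) {z : ℂ} (hz : 0 < z.im) :
    (moebius σ z).im ≤ max z.im z.im⁻¹ := by
  rw [moebius_im hσ.1]
  rcases one_le_sq_bottom_row_of_mem_AtkinLehner hN hσ with h10 | ⟨h10, h11⟩
  · calc z.im / ((σ 1 0 * z.re + σ 1 1) ^ 2 + (σ 1 0 * z.im) ^ 2)
        ≤ z.im / z.im ^ 2 := by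
          gcongr
          nlinarith [sq_nonneg (σ 1 0 * z.re + σ 1 1), sq_nonneg z.im]
      _ = z.im⁻¹ := by field_simp
      _ ≤ _ := le_max_right _ _
  · calc z.im / ((σ 1 0 * z.re + σ 1 1) ^ 2 + (σ 1 0 * z.im) ^ 2)
        ≤ z.im := by
          rw [h10]
          exact div_le_self hz.le (by simpa using h11)
      _ ≤ _ := le_max_left _ _

lemma moebius_im_le_Hgt {N : ℕ} (hN : 0 < N) {g σ : M2} (hg : g.det = 1)
    (hσ : σ ∈ AtkinLehner N) : (moebius σ (moebius g Complex.I)).im ≤ Hgt N g := by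
  have hz : 0 < (moebius g Complex.I).im := by
    rw [moebius_I_im hg]
    exact one_div_pos.mpr (bottom_row_sq_add_sq_pos hg)
  refine le_csSup ⟨max (moebius g Complex.I).im (moebius g Complex.I).im⁻¹, ?_⟩ ⟨σ, hσ, rfl⟩
  rintro _ ⟨τ, hτ, rfl⟩
  exact moebius_im_le_of_mem_AtkinLehner hN hτ hz

lemma inv_eq_of_det_eq_one {h : M2} (hh : h.det = 1) :
    h⁻¹ = !![h 1 1, -h 0 1; -h 1 0, h 0 0] := by
  rw [inv_def, hh, adjugate_fin_two]
  simp

lemma two_mul_Pfun_inv_mul_upper_mul {h : M2} (hh : h.det = 1) (b : ℝ) :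
    2 * Pfun (h⁻¹ * !![0, b; 0, 0] * h) = b ^ 2 * (h 1 0 ^ 2 + h 1 1 ^ 2) ^ 2 := by
  rw [inv_eq_of_det_eq_one hh, Matrix.eta_fin_two h, mul_fin_two, mul_fin_two, Pfun]
  simp only [of_apply, cons_val', cons_val_zero, cons_val_one, empty_val', cons_val_fin_one]
  ring

lemma two_mul_Pfun_conj_mul_im_sq {σ g X : M2} {b : ℝ} (hσ : σ.det = 1) (hg : g.det = 1)
    (hX : σ * X = !![0, b; 0, 0] * σ) :
    2 * Pfun (g⁻¹ * X * g) * (moebius σ (moebius g Complex.I)).im ^ 2 = b ^ 2 := by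
  have hσg : (σ * g).det = 1 := by rw [det_mul, hσ, hg, one_mul]
  have hconj : g⁻¹ * X * g = (σ * g)⁻¹ * !![0, b; 0, 0] * (σ * g) := by
    rw [Matrix.mul_inv_rev, ← nonsing_inv_mul_cancel_left (A := σ) X (hσ ▸ isUnit_one), hX]
    simp only [Matrix.mul_assoc]
  rw [hconj, two_mul_Pfun_inv_mul_upper_mul hσg, moebius_moebius_I_im hσ hg]
  have := bottom_row_sq_add_sq_pos hσg
  field_simp

lemma mul_eq_upper_mul_of_mul_row_eq_zero {σ X : M2} (hσ : σ.det = 1) (htr : X.trace = 0)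
    (h0 : (σ * X) 1 0 = 0) (h1 : (σ * X) 1 1 = 0) (hσ10 : σ 1 0 ≠ 0) :
    σ * X = !![0, -X 1 0 / σ 1 0 ^ 2; 0, 0] * σ := by
  rw [det_fin_two] at hσ
  rw [trace_fin_two] at htr
  simp only [mul_apply, Fin.sum_univ_two] at h0 h1
  ext i j
  fin_cases i <;> fin_cases j <;>
    simp only [Fin.zero_eta, Fin.mk_one, Fin.isValue, mul_apply, Fin.sum_univ_two, of_apply,
      cons_val', cons_val_fin_one, cons_val_zero, cons_val_one, zero_mul, zero_add, add_zero] <;>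
    field_simp
  · linear_combination σ 0 0 * h0 - X 1 0 * hσ
  · linear_combination σ 0 0 * σ 1 0 * h1 - σ 1 0 * X 1 1 * hσ - σ 1 0 * htr + h0
  · exact h0
  · exact h1

lemma exists_coprime_mul_eq_mul (a : ℤ) {K : ℤ} (hK : K ≠ 0) :
    ∃ (u : ℤ) (V : ℕ), 0 < V ∧ IsCoprime u V ∧ a * V = K * u := by
  refine ⟨(a / K : ℚ).num, (a / K : ℚ).den, Rat.den_pos _, Rat.isCoprime_num_den _, ?_⟩
  have h := Rat.mul_den_eq_num (a / K : ℚ)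
  have hKQ : (K : ℚ) ≠ 0 := by exact_mod_cast hK
  rw [div_mul_eq_mul_div, div_eq_iff hKQ] at h
  exact_mod_cast h.trans (mul_comm _ _)

lemma sq_dvd_of_mul_eq_mul {ℓ a m K u V : ℤ} (hK : K ≠ 0) (hrel : ℓ * a ^ 2 + m * K = 0)
    (hcop : IsCoprime u V) (haV : a * V = K * u) : ℓ * a * u = -(m * V) ∧ V ^ 2 ∣ ℓ * K := by
  have hau : ℓ * a * u = -(m * V) :=
    mul_left_cancel₀ hK (by linear_combination V * hrel - ℓ * a * haV)
  refine ⟨hau, (hcop.pow (m := 2) (n := 2)).symm.dvd_of_dvd_mul_right ⟨-m, ?_⟩⟩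
  linear_combination -(ℓ * u) * haV + V * hau

lemma exists_level_of_sq_dvd {N V : ℕ} (hsf : Squarefree N) {n : ℤ} (hNn : (N : ℤ) ∣ n)
    (hVn : (V : ℤ) ^ 2 ∣ n) :
    ∃ Q c : ℕ, 0 < Q ∧ Q ∣ N ∧ Nat.Coprime Q V ∧ N * c = Q * V ∧ (Q : ℤ) * V ^ 2 ∣ n := by
  set N₁ := Nat.gcd N V
  obtain ⟨Q, hQ⟩ : N₁ ∣ N := Nat.gcd_dvd_left N V
  obtain ⟨c, hc⟩ : N₁ ∣ V := Nat.gcd_dvd_right N V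
  have hQN : Q ∣ N := Dvd.intro_left N₁ hQ.symm
  have hQN₁ : Nat.Coprime N₁ Q := Nat.coprime_of_squarefree_mul (hQ ▸ hsf)
  have hQV : Nat.Coprime Q V := by
    refine Nat.eq_one_of_dvd_one (hQN₁.symm ▸ Nat.dvd_gcd (Nat.gcd_dvd_left Q V) ?_)
    exact Nat.dvd_gcd ((Nat.gcd_dvd_left Q V).trans hQN) (Nat.gcd_dvd_right Q V)
  refine ⟨Q, c, Nat.pos_of_ne_zero ?_, hQN, hQV, by rw [hQ, hc]; ring, ?_⟩
  · rintro rfl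
    exact hsf.ne_zero (by simpa using hQ)
  · exact (Nat.Coprime.isCoprime (hQV.pow_right 2)).mul_dvd
      ((Int.natCast_dvd_natCast.mpr hQN).trans hNn) (by exact_mod_cast hVn)

lemma exists_mem_AtkinLehner_of_bottom_row {N Q c V : ℕ} {u : ℤ} (hQ : 0 < Q) (hQN : Q ∣ N)
    (hNc : N * c = Q * V) (hcop : IsCoprime ((Q : ℤ) * u) V) :
    ∃ σ ∈ AtkinLehner N, σ 1 0 = Real.sqrt Q * V ∧ σ 1 1 = -(Real.sqrt Q * u) := by
  obtain ⟨x, y, hxy⟩ := hcop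
  have hQR : (0 : ℝ) < Q := by exact_mod_cast hQ
  have hsq : Real.sqrt Q ^ 2 = Q := Real.sq_sqrt hQR.le
  have hNcR : (N : ℝ) * c = Q * V := by exact_mod_cast hNc
  set σ : M2 := (Real.sqrt Q)⁻¹ •
    !![(Q : ℝ) * ((-x : ℤ) : ℝ), ((-y : ℤ) : ℝ); N * ((c : ℤ) : ℝ), Q * ((-u : ℤ) : ℝ)]
  have hσ10 : σ 1 0 = Real.sqrt Q * V := by
    simp only [σ, Matrix.smul_apply, of_apply, cons_val', cons_val_zero, cons_val_one,
      cons_val_fin_one, smul_eq_mul, Int.cast_natCast, hNcR]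
    field_simp
    linear_combination -(V : ℝ) * hsq
  have hσ11 : σ 1 1 = -(Real.sqrt Q * u) := by
    simp only [σ, Matrix.smul_apply, of_apply, cons_val', cons_val_one, cons_val_fin_one,
      smul_eq_mul, Int.cast_neg]
    field_simp
    linear_combination (u : ℝ) * hsq
  have hσ : σ.det = 1 := by
    rw [det_fin_two, hσ10, hσ11]
    simp only [σ, Matrix.smul_apply, of_apply, cons_val', cons_val_zero, cons_val_one,
      empty_val', cons_val_fin_one, smul_eq_mul, Int.cast_neg]
    field_simp
    linear_combination (by exact_mod_cast hxy : (x : ℝ) * (Q * u) + y * V = 1)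
  exact ⟨σ, ⟨hσ, Q, -x, -y, c, -u, hQ, hQN, rfl⟩, hσ10, hσ11⟩

lemma exists_mem_AtkinLehner_mul_eq_upper_mul_of_ne_zero {N ℓ : ℕ} (hsf : Squarefree N)
    (hℓ : 0 < ℓ) {a m K : ℤ} (hK : K ≠ 0) (hNK : (N : ℤ) ∣ ℓ * K)
    (hrel : ℓ * a ^ 2 + m * K = 0) :
    ∃ σ ∈ AtkinLehner N, ∃ b : ℝ, 1 ≤ (ℓ * b) ^ 2 ∧
      σ * !![(a : ℝ), m / ℓ; K, -a] = !![0, b; 0, 0] * σ := by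
  obtain ⟨u, V, hV, hcop, haV⟩ := exists_coprime_mul_eq_mul a hK
  obtain ⟨hau, hVK⟩ := sq_dvd_of_mul_eq_mul hK hrel hcop haV
  obtain ⟨Q, c, hQ, hQN, hQV, hNc, j, hj⟩ := exists_level_of_sq_dvd hsf hNK hVK
  obtain ⟨σ, hσ, hσ10, hσ11⟩ :=
    exists_mem_AtkinLehner_of_bottom_row hQ hQN hNc ((Nat.Coprime.isCoprime hQV).mul_left hcop)
  have hℓR : (ℓ : ℝ) ≠ 0 := by positivity
  have hQR : (0 : ℝ) < Q := by exact_mod_cast hQ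
  have hσ10sq : σ 1 0 ^ 2 = Q * V ^ 2 := by rw [hσ10, mul_pow, Real.sq_sqrt hQR.le]
  refine ⟨σ, hσ, _, ?_,
    mul_eq_upper_mul_of_mul_row_eq_zero hσ.1 (by simp [trace_fin_two]) ?_ ?_ ?_⟩
  · have hb : (ℓ : ℝ) * (-!![(a : ℝ), m / ℓ; K, -a] 1 0 / σ 1 0 ^ 2) = -j := by
      simp only [of_apply, cons_val', cons_val_zero, cons_val_one, cons_val_fin_one, empty_val']
      rw [hσ10sq]
      field_simp
      linear_combination -(by exact_mod_cast hj : (ℓ : ℝ) * K = Q * V ^ 2 * j)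
    rw [hb, neg_sq]
    exact one_le_intCast_sq (right_ne_zero_of_mul (hj ▸ mul_ne_zero (by exact_mod_cast hℓ.ne') hK))
  · simp only [mul_apply, Fin.sum_univ_two, hσ10, hσ11, of_apply, cons_val', cons_val_zero,
      cons_val_one, cons_val_fin_one, empty_val']
    linear_combination Real.sqrt Q * (by exact_mod_cast haV : (a : ℝ) * V = K * u)
  · simp only [mul_apply, Fin.sum_univ_two, hσ10, hσ11, of_apply, cons_val', cons_val_zero,
      cons_val_one, cons_val_fin_one, empty_val']
    field_simp
    linear_combination Real.sqrt Q * (by exact_mod_cast hau : (ℓ : ℝ) * a * u = -(m * V))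
  · rw [hσ10]
    have := Real.sqrt_pos.mpr hQR
    positivity

lemma exists_mem_AtkinLehner_mul_eq_upper_mul {N ℓ : ℕ} (hsf : Squarefree N) (hℓ : 0 < ℓ)
    {a m K : ℤ} (hNK : (N : ℤ) ∣ ℓ * K) (hrel : ℓ * a ^ 2 + m * K = 0)
    (hX : !![(a : ℝ), m / ℓ; K, -a] ≠ 0) :
    ∃ σ ∈ AtkinLehner N, ∃ b : ℝ, 1 ≤ (ℓ * b) ^ 2 ∧
      σ * !![(a : ℝ), m / ℓ; K, -a] = !![0, b; 0, 0] * σ := by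
  rcases eq_or_ne K 0 with rfl | hK
  · obtain rfl : a = 0 := by simpa [hℓ.ne'] using hrel
    have hm : m ≠ 0 := by rintro rfl; exact hX (by ext i j; fin_cases i <;> fin_cases j <;> simp)
    refine ⟨1, one_mem_AtkinLehner N, m / ℓ, ?_, by simp⟩
    rw [mul_div_cancel₀ _ (by positivity)]
    exact one_le_intCast_sq hm
  · exact exists_mem_AtkinLehner_mul_eq_upper_mul_of_ne_zero hsf hℓ hK hNK hrel

lemma exists_int_of_mem_Rlat {N ℓ : ℕ} (hℓ : 0 < ℓ) (hdvd : ℓ ∣ N) {X : M2}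
    (hX : X ∈ Rlat N ℓ) :
    ∃ a d m K : ℤ, X = !![(a : ℝ), m / ℓ; K, d] ∧ (N : ℤ) ∣ ℓ * K := by
  obtain ⟨⟨a, ha⟩, ⟨m, hm⟩, ⟨k, hk⟩, ⟨d, hd⟩⟩ := hX
  obtain ⟨ℓ', rfl⟩ := hdvd
  refine ⟨a, d, m, k * ℓ', ?_, ⟨k, by push_cast; ring⟩⟩
  rw [eta_fin_two X, ha, hm, hk, hd]
  have : (ℓ : ℝ) ≠ 0 := by positivity
  push_cast
  field_simp

lemma eq_zero_of_abs_intCast_lt_one {n : ℤ} (h : |(n : ℝ)| < 1) : n = 0 :=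
  Int.abs_lt_one_iff.mp (by exact_mod_cast h)

lemma trace_eq_zero_of_mem_Rlat {N ℓ : ℕ} {X : M2} (hX : X ∈ Rlat N ℓ)
    (htr : X.trace ^ 2 < 1) : X.trace = 0 := by
  obtain ⟨⟨a, ha⟩, -, -, ⟨d, hd⟩⟩ := hX
  rw [trace_fin_two, ha, hd] at htr ⊢
  rw [sq_lt_one_iff_abs_lt_one] at htr
  exact_mod_cast eq_zero_of_abs_intCast_lt_one (n := a + d) (by exact_mod_cast htr)

lemma det_eq_zero_of_mem_Rlat {N ℓ : ℕ} (hℓ : 0 < ℓ) (hdvd : ℓ ∣ N) {X : M2}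
    (hX : X ∈ Rlat N ℓ) (hdet : ℓ * |X.det| < 1) : X.det = 0 := by
  obtain ⟨a, d, m, K, rfl, -⟩ := exists_int_of_mem_Rlat hℓ hdvd hX
  have hℓR : (0 : ℝ) < ℓ := by exact_mod_cast hℓ
  have hint : (ℓ : ℝ) * det !![(a : ℝ), m / ℓ; K, d] = ((ℓ * a * d - m * K : ℤ) : ℝ) := by
    rw [det_fin_two_of]
    push_cast
    field_simp
  have h0 : (ℓ : ℝ) * det !![(a : ℝ), m / ℓ; K, d] = 0 := by
    rw [hint, eq_zero_of_abs_intCast_lt_one (n := ℓ * a * d - m * K)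
      (by rwa [← hint, abs_mul, abs_of_pos hℓR]), Int.cast_zero]
  exact (mul_eq_zero.mp h0).resolve_left hℓR.ne'

lemma exists_nilpotent_of_mem_Rlat {N ℓ : ℕ} (hℓ : 0 < ℓ) (hdvd : ℓ ∣ N) {X : M2}
    (hX : X ∈ Rlat N ℓ) (htr : X.trace = 0) (hdet : X.det = 0) :
    ∃ a m K : ℤ, X = !![(a : ℝ), m / ℓ; K, -a] ∧ (N : ℤ) ∣ ℓ * K ∧ ℓ * a ^ 2 + m * K = 0 := by
  obtain ⟨a, d, m, K, rfl, hNK⟩ := exists_int_of_mem_Rlat hℓ hdvd hX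
  rw [trace_fin_two_of] at htr
  rw [det_fin_two_of] at hdet
  have hd : (d : ℝ) = -a := by linear_combination htr
  refine ⟨a, m, K, by rw [hd], hNK, ?_⟩
  have hℓR : (ℓ : ℝ) ≠ 0 := by positivity
  have : (ℓ : ℝ) * a ^ 2 + m * K = 0 := by
    rw [hd] at hdet
    field_simp at hdet
    linear_combination -hdet
  exact_mod_cast this

lemma Pfun_nonneg (γ : M2) : 0 ≤ Pfun γ := by
  unfold Pfun
  positivity

lemma sq_trace_le_two_mul_Pfun_add_det (γ : M2) : γ.trace ^ 2 ≤ 2 * (Pfun γ + γ.det) := by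
  rw [trace_fin_two, det_fin_two, Pfun]
  nlinarith [sq_nonneg (γ 0 1 - γ 1 0)]

lemma abs_det_le_Pfun (γ : M2) : |γ.det| ≤ Pfun γ := by
  rw [det_fin_two, Pfun, abs_le]
  constructor <;> nlinarith [sq_nonneg (γ 0 0 + γ 1 1), sq_nonneg (γ 0 1 - γ 1 0),
    sq_nonneg (γ 0 0 - γ 1 1), sq_nonneg (γ 0 1 + γ 1 0)]

theorem one_le_two_mul_Pfun_mul_sq_mul_Hgt_sq {N ℓ : ℕ} (hsf : Squarefree N) (hℓ : 0 < ℓ)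
    (hdvd : ℓ ∣ N) {g γ : M2} (hg : g.det = 1) (hγR : γ ∈ Rconj N ℓ g) (hγ0 : γ ≠ 0)
    (htr : γ.trace = 0) (hdet : γ.det = 0) : 1 ≤ 2 * Pfun γ * ℓ ^ 2 * Hgt N g ^ 2 := by
  have hgdet : IsUnit g.det := hg ▸ isUnit_one
  have hgu : IsUnit g := (isUnit_iff_isUnit_det g).mpr hgdet
  have hγ : γ = g⁻¹ * (g * γ * g⁻¹) * g := by
    simp only [Matrix.mul_assoc, nonsing_inv_mul g hgdet,
      Matrix.mul_one, ← Matrix.mul_assoc g⁻¹, Matrix.one_mul]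
  obtain ⟨a, m, K, hX, hNK, hrel⟩ := exists_nilpotent_of_mem_Rlat hℓ hdvd hγR
    (by rwa [trace_conj hgu]) (by rwa [det_conj hgu])
  have hX0 : !![(a : ℝ), m / ℓ; K, -a] ≠ 0 := by
    rw [← hX]
    intro h
    exact hγ0 (by rw [hγ, h, Matrix.mul_zero, Matrix.zero_mul])
  obtain ⟨σ, hσ, b, hb, hσX⟩ := exists_mem_AtkinLehner_mul_eq_upper_mul hsf hℓ hNK hrel hX0
  rw [← hX] at hσX
  have him_pos : 0 < (moebius σ (moebius g Complex.I)).im := by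
    rw [moebius_moebius_I_im hσ.1 hg]
    exact one_div_pos.mpr (bottom_row_sq_add_sq_pos (by rw [det_mul, hσ.1, hg, one_mul]))
  have him_le := moebius_im_le_Hgt (Nat.pos_of_ne_zero hsf.ne_zero) hg hσ
  calc 1 ≤ (ℓ * b) ^ 2 := hb
    _ = 2 * Pfun γ * ℓ ^ 2 * (moebius σ (moebius g Complex.I)).im ^ 2 := by
        rw [mul_pow, ← two_mul_Pfun_conj_mul_im_sq hσ.1 hg hσX, ← hγ]
        ring
    _ ≤ _ := by
        gcongr
        exact mul_nonneg (mul_nonneg zero_le_two (Pfun_nonneg _)) (sq_nonneg _)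

lemma sq_mul_le_of_le_mul_inv {L x c : ℝ} (hL : 0 < L) (hc : 0 ≤ c) (h : L ≤ c * x⁻¹) :
    (L * x) ^ 2 ≤ c ^ 2 := by
  have hx : 0 < x := by
    by_contra! hx
    linarith [mul_nonpos_of_nonneg_of_nonpos hc (inv_nonpos.mpr hx)]
  exact pow_le_pow_left₀ (by positivity) ((le_mul_inv_iff₀ hx).mp h) 2

lemma sq_mul_le_of_le_mul_min {L c ℓ H δ : ℝ} (hL : 0 < L) (hc : 0 ≤ c) (hℓ : 0 ≤ ℓ)
    (hδ : 0 ≤ δ) (h : L ≤ c * min (Real.sqrt ℓ)⁻¹ (ℓ⁻¹ * H⁻¹ * (Real.sqrt δ)⁻¹)) :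
    L ^ 2 * ℓ ≤ c ^ 2 ∧ L ^ 2 * (ℓ ^ 2 * H ^ 2 * δ) ≤ c ^ 2 := by
  have h₁ := sq_mul_le_of_le_mul_inv hL hc (h.trans (by gcongr; exact min_le_left _ _))
  have h₂ := sq_mul_le_of_le_mul_inv (x := ℓ * H * Real.sqrt δ) hL hc
    (by rw [mul_inv, mul_inv]; exact h.trans (by gcongr; exact min_le_right _ _))
  rw [mul_pow, Real.sq_sqrt hℓ] at h₁
  rw [mul_pow, mul_pow, mul_pow, Real.sq_sqrt hδ] at h₂
  exact ⟨h₁, h₂⟩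

/-- If L is small enough then R(ℓ;g) ∩ Ω⋆(δ,L) is empty. -/
theorem stmt1 : ∃ c : ℝ, 0 < c ∧
    ∀ (N ℓ : ℕ) (g : M2) (δ L : ℝ), Squarefree N → 0 < N → 0 < ℓ → ℓ ∣ N →
    g.det = 1 → 0 < δ → δ ≤ 1 → 0 < L →
    L ≤ c * min (Real.sqrt ℓ)⁻¹ ((ℓ : ℝ)⁻¹ * (Hgt N g)⁻¹ * (Real.sqrt δ)⁻¹) →
    Rconj N ℓ g ∩ OmegaStar δ L = ∅ := by
  refine ⟨1 / 4, by norm_num, ?_⟩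
  intro N ℓ g δ L hsf _ hℓ hdvd hg hδ _ hL hLc
  rw [eq_empty_iff_forall_notMem]
  rintro γ ⟨hγR, ⟨hPL, hPδ⟩, hγ0⟩
  have hgu : IsUnit g := (isUnit_iff_isUnit_det g).mpr (hg ▸ isUnit_one)
  have hℓ1 : (1 : ℝ) ≤ ℓ := by exact_mod_cast hℓ
  obtain ⟨hLℓ, hLH⟩ := sq_mul_le_of_le_mul_min hL (by norm_num) (Nat.cast_nonneg ℓ) hδ.le hLc
  -- `tr² ≤ 2 (P + det) ≤ 4 P ≤ 4 L² ≤ 1 / 4`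
  have htr : γ.trace = 0 := by
    rw [← trace_conj hgu]
    refine trace_eq_zero_of_mem_Rlat hγR ?_
    rw [trace_conj hgu]
    nlinarith [sq_trace_le_two_mul_Pfun_add_det γ, abs_det_le_Pfun γ, le_abs_self γ.det]
  -- `ℓ |det| ≤ ℓ P ≤ ℓ L² ≤ 1 / 16`
  have hdet : γ.det = 0 := by
    rw [← det_conj hgu]
    refine det_eq_zero_of_mem_Rlat hℓ hdvd hγR ?_
    rw [det_conj hgu]
    nlinarith [abs_det_le_Pfun γ]
  have hLB := one_le_two_mul_Pfun_mul_sq_mul_Hgt_sq hsf hℓ hdvd hg hγR hγ0 htr hdet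
  -- `1 ≤ 2 P ℓ² H² ≤ 4 δ L² ℓ² H² ≤ 1 / 4`
  nlinarith [sq_nonneg ((ℓ : ℝ) * Hgt N g)]
end
end

section
/- For every ε > 0 there is a constant C = C(ε) > 0 with the following property. Let N be a squarefree positive integer, ℓ a positive divisor of N, δ ∈ (0,1], L > 0, and let z = x + iy ∈ ℍ satisfy Im(σ·z) ≤ y for all σ ∈ A₀(N); put g = (√y, x/√y; 0, 1/√y) ∈ SL₂(ℝ). Then the set of pairs (γ₁, γ₂) of upper-triangular matrices γ₁, γ₂ ∈ R(ℓ) (lower-left entry equal to 0) with g⁻¹·γᵢ·g ∈ Ω⋆(δ,L) for i = 1, 2 and det(γ₁) = det(γ₂) is finite with cardinality at most C·(N(1+L))^ε · ℓL² · (1 + ℓ·y²·δ + ℓ·y²·δ·L + ℓ·y²·δ^{3/2}·L²). -/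
open MeasureTheory Real Matrix Set

noncomputable section

/-
An upper-triangular `γ ∈ R(ℓ)` is `(a, b/ℓ; 0, d)` with `a, b, d ∈ ℤ`, and conjugation by
`g = (√y, x/√y; 0, 1/√y)` turns it into `(a, ((a - d)x + b/ℓ)/y; 0, d)`. Membership in `Ω(δ,L)` then
gives `|a|, |d| ≤ √2 L`, `|d - a| ≤ 2√δ L` and `|b - ℓx(d - a)| ≤ T := 2ℓ√δ L y`, so `γ` is a lattice
point of a box in which `b` has at most `2T + 1` values for each `(a, d)`. A pair of determinant
`n = ad ≠ 0` is fixed by its first member, a divisor of `n` (with `|n| ≤ 2L²`) and one of `2T + 1`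
values of `b`, and the divisor bound `τ(n) ≪_ε n^ε` controls the divisors. Pairs of determinant `0`
have `a = 0` or `d = 0` on both sides and are counted directly; if `2L² < 1` nothing else occurs.
-/

open Finset

theorem add_one_le_mul_rpow_pow {ε : ℝ} (hε : 0 < ε) {p : ℝ} (hp : 2 ≤ p) (a : ℕ) :
    (a + 1 : ℝ) ≤ (1 + 1 / (ε * log 2)) * (p ^ a) ^ ε := by
  have hc : 0 < ε * log 2 := mul_pos hε (log_pos one_lt_two)
  have hexp : 1 + a * (ε * log 2) ≤ (p ^ a) ^ ε := by
    rw [← rpow_natCast_mul (by linarith), rpow_def_of_pos (by linarith)]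
    have := add_one_le_exp (log p * (a * ε))
    have := log_le_log two_pos hp
    nlinarith [mul_nonneg (Nat.cast_nonneg a) hε.le]
  calc (a + 1 : ℝ) ≤ (1 + 1 / (ε * log 2)) * (1 + a * (ε * log 2)) := by
        field_simp
        nlinarith [mul_nonneg (Nat.cast_nonneg (α := ℝ) a) (sq_nonneg (ε * log 2))]
    _ ≤ _ := by gcongr

theorem add_one_le_rpow_pow {ε p : ℝ} (hp : 0 ≤ p) (h2 : 2 ≤ p ^ ε) (a : ℕ) :
    (a + 1 : ℝ) ≤ (p ^ a) ^ ε := by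
  rw [← rpow_natCast_mul hp, mul_comm, rpow_mul_natCast hp]
  calc (a + 1 : ℝ) = 1 + a * 1 := by ring
    _ ≤ (1 + 1) ^ a := one_add_mul_le_pow (by norm_num) a
    _ ≤ (p ^ ε) ^ a := by gcongr; linarith

theorem exists_card_divisors_le_mul_rpow {ε : ℝ} (hε : 0 < ε) :
    ∃ C : ℝ, 0 ≤ C ∧ ∀ n : ℕ, n ≠ 0 → (#n.divisors : ℝ) ≤ C * (n : ℝ) ^ ε := by
  set B : ℝ := 1 + 1 / (ε * log 2)
  have hB : 1 ≤ B := le_add_of_nonneg_right (by have := log_pos one_lt_two; positivity)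
  set P : ℕ := ⌈(2 : ℝ) ^ (1 / ε)⌉₊
  refine ⟨B ^ P, by positivity, fun n hn => ?_⟩
  -- A prime `p ≥ P` has `p ^ ε ≥ 2`, so only the finitely many primes below `P` cost a factor `B`.
  have hlocal : ∀ p ∈ n.primeFactors, ((n.factorization p + 1 : ℕ) : ℝ) ≤
      (if p < P then B else 1) * ((p : ℝ) ^ n.factorization p) ^ ε := by
    intro p hp
    have hp2 : (2 : ℝ) ≤ p := by exact_mod_cast (Nat.prime_of_mem_primeFactors hp).two_le
    push_cast
    split_ifs with hpP
    · exact add_one_le_mul_rpow_pow hε hp2 _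
    · rw [one_mul]
      refine add_one_le_rpow_pow (by linarith) ?_ _
      calc (2 : ℝ) = ((2 : ℝ) ^ (1 / ε)) ^ ε := by
            rw [← rpow_mul zero_le_two, one_div_mul_cancel hε.ne', rpow_one]
        _ ≤ (p : ℝ) ^ ε := by
            gcongr
            exact (Nat.le_ceil _).trans (by exact_mod_cast not_lt.mp hpP)
  have hsmall : ∏ p ∈ n.primeFactors, (if p < P then B else 1) ≤ B ^ P := by
    rw [← prod_filter, prod_const]
    refine pow_le_pow_right₀ hB ((card_le_card fun p hp => ?_).trans (card_range P).le)
    exact mem_range.mpr (mem_filter.mp hp).2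
  have hrest : ∏ p ∈ n.primeFactors, ((p : ℝ) ^ n.factorization p) ^ ε = (n : ℝ) ^ ε := by
    rw [finsetProd_rpow _ _ (fun p _ => by positivity)]
    congr 1
    conv_rhs => rw [← Nat.prod_factorization_pow_eq_self hn]
    rw [Nat.prod_factorization_eq_prod_primeFactors]
    push_cast
    rfl
  calc (#n.divisors : ℝ) = ∏ p ∈ n.primeFactors, ((n.factorization p + 1 : ℕ) : ℝ) := by
        rw [Nat.card_divisors hn]; push_cast; rfl
    _ ≤ ∏ p ∈ n.primeFactors, (if p < P then B else 1) * ((p : ℝ) ^ n.factorization p) ^ ε :=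
        prod_le_prod (fun _ _ => by positivity) hlocal
    _ ≤ B ^ P * (n : ℝ) ^ ε := by
        rw [prod_mul_distrib, hrest]
        gcongr

theorem Int.card_divisors_eq_two_mul (z : ℤ) : #z.divisors = 2 * #z.natAbs.divisors := by
  rw [Int.divisors, card_disjUnion, card_map, card_map, two_mul]

theorem card_filter_pairs_eq_le {α β : Type*} [DecidableEq α] [DecidableEq β] [Zero β]
    (s : Finset α) (f : α → β) {M : ℝ} (hM0 : 0 ≤ M)
    (hM : ∀ a ∈ s, f a ≠ 0 → (#{a' ∈ s | f a' = f a} : ℝ) ≤ M) :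
    (#{p ∈ s ×ˢ s | f p.1 = f p.2} : ℝ) ≤ #{a ∈ s | f a = 0} ^ 2 + #s * M := by
  set P := {p ∈ s ×ˢ s | f p.1 = f p.2}
  set P' := {p ∈ P | ¬f p.1 = 0}
  have hzero : #{p ∈ P | f p.1 = 0} ≤ #{a ∈ s | f a = 0} ^ 2 := by
    rw [sq, ← card_product]
    refine card_le_card fun p hp => ?_
    simp only [P, mem_filter, mem_product] at hp ⊢
    exact ⟨⟨hp.1.1.1, hp.2⟩, hp.1.1.2, hp.1.2 ▸ hp.2⟩
  have hfiber : ∀ a ∈ P'.image Prod.fst, (#{p ∈ P' | p.1 = a} : ℝ) ≤ M := by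
    intro a ha
    obtain ⟨⟨a, b⟩, hab, rfl⟩ := mem_image.mp ha
    simp only [P', P, mem_filter, mem_product] at hab
    refine (Nat.cast_le.mpr (card_le_card_of_injOn Prod.snd (fun p hp => ?_) ?_)).trans
      (hM a hab.1.1.1 hab.2)
    · simp only [P', P, mem_coe, mem_filter, mem_product] at hp ⊢
      exact ⟨hp.1.1.1.2, hp.2 ▸ hp.1.1.2.symm⟩
    · intro p hp q hq h
      exact Prod.ext ((mem_filter.mp hp).2.trans (mem_filter.mp hq).2.symm) h
  have himage : #(P'.image Prod.fst) ≤ #s := card_le_card fun a ha => by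
    obtain ⟨p, hp, rfl⟩ := mem_image.mp ha
    exact (mem_product.mp (mem_filter.mp (mem_filter.mp hp).1).1).1
  rw [← card_filter_add_card_filter_not (s := P) (fun p => f p.1 = 0),
    card_eq_sum_card_image Prod.fst P']
  push_cast
  gcongr
  · exact_mod_cast hzero
  · calc _ ≤ ∑ _a ∈ P'.image Prod.fst, M := sum_le_sum hfiber
      _ ≤ #s * M := by rw [sum_const, nsmul_eq_mul]; gcongr

def intBall (c r : ℝ) : Finset ℤ := Icc ⌈c - r⌉ ⌊c + r⌋

theorem mem_intBall {c r : ℝ} {m : ℤ} : m ∈ intBall c r ↔ |(m : ℝ) - c| ≤ r := by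
  rw [intBall, Finset.mem_Icc, Int.ceil_le, Int.le_floor, abs_le]
  constructor <;> rintro ⟨h₁, h₂⟩ <;> constructor <;> linarith

theorem card_intBall_le (c : ℝ) {r : ℝ} (hr : 0 ≤ r) : (#(intBall c r) : ℝ) ≤ 2 * r + 1 := by
  rw [intBall, Int.card_Icc]
  have h₁ := Int.floor_le (c + r)
  have h₂ := Int.le_ceil (c - r)
  rcases le_or_gt 0 (⌊c + r⌋ + 1 - ⌈c - r⌉) with h | h
  · have : (((⌊c + r⌋ + 1 - ⌈c - r⌉).toNat : ℤ) : ℝ) ≤ 2 * r + 1 := by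
      rw [Int.toNat_of_nonneg h]; push_cast; linarith
    exact_mod_cast this
  · rw [Int.toNat_of_nonpos h.le]; push_cast; linarith

theorem card_intBall_erase_zero_le {r : ℝ} (hr : 0 ≤ r) :
    (#((intBall 0 r).erase 0) : ℝ) ≤ 2 * r := by
  have h0 : (0 : ℤ) ∈ intBall 0 r := mem_intBall.mpr (by simpa using hr)
  have := card_intBall_le 0 hr
  rw [card_erase_of_mem h0, Nat.cast_sub (card_pos.mpr ⟨0, h0⟩)]
  push_cast
  linarith

theorem card_le_card_image_fst_mul {α : Type*} [DecidableEq α] {X : Finset (α × ℤ)}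
    {f : α → ℝ} {r : ℝ} (hr : 0 ≤ r) (hX : ∀ p ∈ X, |(p.2 : ℝ) - f p.1| ≤ r) :
    (#X : ℝ) ≤ #(X.image Prod.fst) * (2 * r + 1) := by
  rw [card_eq_sum_card_image Prod.fst X]
  push_cast
  rw [← nsmul_eq_mul]
  refine sum_le_card_nsmul _ _ _ fun a _ => (Nat.cast_le.mpr ?_).trans (card_intBall_le (f a) hr)
  refine card_le_card_of_injOn Prod.snd (fun p hp => ?_) fun p hp q hq h => ?_
  · obtain ⟨hpX, rfl⟩ := mem_filter.mp hp
    exact mem_intBall.mpr (hX p hpX)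
  · exact Prod.ext ((mem_filter.mp hp).2.trans (mem_filter.mp hq).2.symm) h

theorem card_le_of_forall_mul_eq_zero {P : Finset (ℤ × ℤ)} {K : ℝ} (hK : 0 ≤ K)
    (hP : ∀ q ∈ P, q ≠ 0 ∧ q.1 * q.2 = 0 ∧ |(q.2 : ℝ) - q.1| ≤ K) : (#P : ℝ) ≤ 4 * K := by
  set E := (intBall 0 K).erase 0
  have hsub : P ⊆ E.image (Prod.mk 0) ∪ E.image (·, 0) := by
    rintro ⟨a, d⟩ hq
    obtain ⟨hne, hzero, hK'⟩ := hP _ hq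
    rcases mul_eq_zero.mp hzero with rfl | rfl
    · refine mem_union_left _ (mem_image.mpr ⟨d, mem_erase.mpr ⟨?_, mem_intBall.mpr ?_⟩, rfl⟩)
      · rintro rfl; exact hne rfl
      · simpa using hK'
    · refine mem_union_right _ (mem_image.mpr ⟨a, mem_erase.mpr ⟨?_, mem_intBall.mpr ?_⟩, rfl⟩)
      · rintro rfl; exact hne rfl
      · simpa [abs_sub_comm] using hK'
  have h := (Finset.card_le_card hsub).trans
    ((Finset.card_union_le _ _).trans (add_le_add Finset.card_image_le Finset.card_image_le))
  calc (#P : ℝ) ≤ #E + #E := by exact_mod_cast h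
    _ ≤ 2 * K + 2 * K := add_le_add (card_intBall_erase_zero_le hK) (card_intBall_erase_zero_le hK)
    _ = 4 * K := by ring

def lattTriples (A K c T : ℝ) : Finset ((ℤ × ℤ) × ℤ) :=
  {q ∈ intBall 0 A ×ˢ intBall 0 A | |(q.2 : ℝ) - q.1| ≤ K}.biUnion
    fun q => (intBall (c * (q.2 - q.1)) T).image (Prod.mk q)

def triDet (t : (ℤ × ℤ) × ℤ) : ℤ := t.1.1 * t.1.2

theorem mem_lattTriples {A K c T : ℝ} {t : (ℤ × ℤ) × ℤ} :
    t ∈ lattTriples A K c T ↔ |(t.1.1 : ℝ)| ≤ A ∧ |(t.1.2 : ℝ)| ≤ A ∧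
      |(t.1.2 : ℝ) - t.1.1| ≤ K ∧ |(t.2 : ℝ) - c * (t.1.2 - t.1.1)| ≤ T := by
  obtain ⟨⟨a, d⟩, b⟩ := t
  simp [lattTriples, mem_intBall, and_assoc]

section lattTriples

variable {A K c T : ℝ}

theorem card_lattTriples_le (hA : 0 ≤ A) (hK : 0 ≤ K) (hT : 0 ≤ T) :
    (#(lattTriples A K c T) : ℝ) ≤ (2 * A + 1) * (2 * K + 1) * (2 * T + 1) := by
  set X := lattTriples A K c T
  have hb := card_le_card_image_fst_mul (X := X) (f := fun q : ℤ × ℤ => c * (q.2 - q.1)) hT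
    fun t ht => (mem_lattTriples.mp ht).2.2.2
  have hd := card_le_card_image_fst_mul (X := X.image Prod.fst) (f := fun a : ℤ => (a : ℝ)) hK
    fun q hq => by
      obtain ⟨t, ht, rfl⟩ := mem_image.mp hq
      exact (mem_lattTriples.mp ht).2.2.1
  have ha : #((X.image Prod.fst).image Prod.fst) ≤ #(intBall 0 A) := by
    refine card_le_card fun a ha => ?_
    simp only [Finset.mem_image] at ha
    obtain ⟨_, ⟨t, ht, rfl⟩, rfl⟩ := ha
    simpa [mem_intBall] using (mem_lattTriples.mp ht).1
  calc (#X : ℝ) ≤ #(X.image Prod.fst) * (2 * T + 1) := hb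
    _ ≤ #((X.image Prod.fst).image Prod.fst) * (2 * K + 1) * (2 * T + 1) := by gcongr
    _ ≤ (2 * A + 1) * (2 * K + 1) * (2 * T + 1) := by
        gcongr
        exact (Nat.cast_le.mpr ha).trans (card_intBall_le 0 hA)

theorem card_lattTriples_filter_triDet_eq_le (hT : 0 ≤ T) {n : ℤ} (hn : n ≠ 0) :
    (#{t ∈ lattTriples A K c T | triDet t = n} : ℝ) ≤ #n.divisors * (2 * T + 1) := by
  refine (card_le_card_image_fst_mul (f := fun q : ℤ × ℤ => c * (q.2 - q.1)) hT
    fun t ht => (mem_lattTriples.mp (mem_filter.mp ht).1).2.2.2).trans ?_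
  gcongr
  refine card_le_card_of_injOn Prod.fst (fun q hq => ?_) fun q hq q' hq' h => ?_
  · obtain ⟨t, ht, rfl⟩ := mem_image.mp hq
    obtain ⟨-, rfl⟩ := mem_filter.mp ht
    exact Int.mem_divisors.mpr ⟨dvd_mul_right _ _, hn⟩
  · obtain ⟨t, ht, rfl⟩ := mem_image.mp hq
    obtain ⟨t', ht', rfl⟩ := mem_image.mp hq'
    have hq₁ : t.1.1 * t.1.2 = n := (mem_filter.mp ht).2
    have he : t.1.1 * t.1.2 = t.1.1 * t'.1.2 := h ▸ hq₁.trans (mem_filter.mp ht').2.symm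
    exact Prod.ext h (mul_left_cancel₀ (left_ne_zero_of_mul (hq₁ ▸ hn)) he)

theorem card_lattTriples_filter_triDet_eq_le_rpow {ε Cτ : ℝ} (hε : 0 ≤ ε) (hCτ0 : 0 ≤ Cτ)
    (hCτ : ∀ n : ℕ, n ≠ 0 → (#n.divisors : ℝ) ≤ Cτ * (n : ℝ) ^ ε) (hT : 0 ≤ T)
    {t : (ℤ × ℤ) × ℤ} (ht : t ∈ lattTriples A K c T) (hn : triDet t ≠ 0) :
    (#{t' ∈ lattTriples A K c T | triDet t' = triDet t} : ℝ) ≤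
      2 * Cτ * (A ^ 2) ^ ε * (2 * T + 1) := by
  obtain ⟨ha, hd, -⟩ := mem_lattTriples.mp ht
  have hsize : ((triDet t).natAbs : ℝ) ≤ A ^ 2 := by
    rw [Nat.cast_natAbs, Int.cast_abs, triDet, Int.cast_mul, abs_mul, sq]
    exact mul_le_mul ha hd (abs_nonneg _) ((abs_nonneg _).trans ha)
  have hτ : (#(triDet t).divisors : ℝ) ≤ 2 * Cτ * (A ^ 2) ^ ε := by
    rw [Int.card_divisors_eq_two_mul, Nat.cast_mul, Nat.cast_two, mul_assoc]
    gcongr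
    exact (hCτ _ (Int.natAbs_ne_zero.mpr hn)).trans (by gcongr)
  exact (card_lattTriples_filter_triDet_eq_le hT hn).trans (by gcongr)

theorem card_lattTriples_filter_triDet_eq_zero_le (hK : 0 ≤ K) (hT : 0 ≤ T) :
    (#{t ∈ lattTriples A K c T | t ≠ 0 ∧ triDet t = 0} : ℝ) ≤ 2 * T + 4 * K * (2 * T + 1) := by
  set X := {t ∈ lattTriples A K c T | t ≠ 0 ∧ triDet t = 0}
  have hX : ∀ t ∈ X, t ∈ lattTriples A K c T ∧ t ≠ 0 ∧ triDet t = 0 := fun t ht => by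
    simpa only [X, Finset.mem_filter] using ht
  rw [← card_filter_add_card_filter_not (s := X) (fun t => t.1 = 0)]
  push_cast
  gcongr
  · refine (Nat.cast_le.mpr ?_).trans (card_intBall_erase_zero_le hT)
    refine card_le_card_of_injOn Prod.snd (fun t ht => ?_) fun t ht t' ht' h => ?_
    · obtain ⟨htX, ht0⟩ := mem_filter.mp ht
      obtain ⟨hmem, hne, -⟩ := hX t htX
      refine mem_erase.mpr ⟨fun hb => hne (Prod.ext ht0 hb), mem_intBall.mpr ?_⟩
      simpa [ht0] using (mem_lattTriples.mp hmem).2.2.2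
    · exact Prod.ext ((mem_filter.mp ht).2.trans (mem_filter.mp ht').2.symm) h
  · refine (card_le_card_image_fst_mul (f := fun q : ℤ × ℤ => c * (q.2 - q.1)) hT
      fun t ht => (mem_lattTriples.mp (hX t (mem_filter.mp ht).1).1).2.2.2).trans ?_
    gcongr
    refine card_le_of_forall_mul_eq_zero hK fun q hq => ?_
    obtain ⟨t, ht, rfl⟩ := mem_image.mp hq
    obtain ⟨htX, hne⟩ := mem_filter.mp ht
    obtain ⟨hmem, -, hzero⟩ := hX t htX
    exact ⟨hne, hzero, (mem_lattTriples.mp hmem).2.2.1⟩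

theorem triDet_eq_zero_of_mem_lattTriples (hA : A < 1) {t : (ℤ × ℤ) × ℤ}
    (ht : t ∈ lattTriples A K c T) : triDet t = 0 := by
  have ha : t.1.1 = 0 :=
    Int.abs_lt_one_iff.mp (by exact_mod_cast (mem_lattTriples.mp ht).1.trans_lt hA)
  rw [triDet, ha, zero_mul]

end lattTriples

theorem sq_add_add_le (u v w : ℝ) : (u + v + w) ^ 2 ≤ 3 * (u ^ 2 + v ^ 2 + w ^ 2) := by
  nlinarith [sq_nonneg (u - v), sq_nonneg (v - w), sq_nonneg (u - w)]

theorem card_lattTriples_filter_triDet_eq_zero_sq_le {ℓ L y s c : ℝ} (hℓ : 1 ≤ ℓ) (hL : 0 ≤ L)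
    (hy : 0 ≤ y) (hs : 0 ≤ s) (hs1 : s ≤ 1) :
    (#{t ∈ lattTriples (√2 * L) (2 * s * L) c (2 * ℓ * s * L * y) | t ≠ 0 ∧ triDet t = 0} : ℝ) ^ 2
      ≤ 3072 * (ℓ * L ^ 2) * (1 + ℓ * y ^ 2 * s ^ 2 + ℓ * y ^ 2 * s ^ 2 * L
        + ℓ * y ^ 2 * s ^ 3 * L ^ 2) := by
  set T := 2 * ℓ * s * L * y
  set K := 2 * s * L
  have e₁ : 0 ≤ ℓ * L ^ 2 * (ℓ * y ^ 2 * s ^ 2 * L) := by positivity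
  have e₂ : ℓ ^ 2 * s ^ 4 * L ^ 4 * y ^ 2 ≤ ℓ ^ 2 * s ^ 3 * L ^ 4 * y ^ 2 := by
    have := pow_le_pow_of_le_one hs hs1 (show 3 ≤ 4 by norm_num)
    have : 0 ≤ ℓ ^ 2 * L ^ 4 * y ^ 2 := by positivity
    nlinarith
  have e₃ : s ^ 2 * L ^ 2 ≤ ℓ * L ^ 2 := by
    gcongr; nlinarith [pow_le_one₀ (n := 2) hs hs1]
  calc _ ≤ (2 * T + 4 * K * (2 * T + 1)) ^ 2 := by
        gcongr
        exact card_lattTriples_filter_triDet_eq_zero_le (by positivity) (by positivity)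
    _ = (2 * T + 8 * K * T + 4 * K) ^ 2 := by ring
    _ ≤ 3 * ((2 * T) ^ 2 + (8 * K * T) ^ 2 + (4 * K) ^ 2) := sq_add_add_le _ _ _
    _ ≤ _ := by simp only [T, K]; nlinarith

theorem card_lattTriples_mul_le {ℓ L y s c : ℝ} (hℓ : 1 ≤ ℓ) (hL : 1 ≤ 2 * L ^ 2) (hL0 : 0 ≤ L)
    (hy : 0 ≤ y) (hs : 0 ≤ s) (hs1 : s ≤ 1) :
    (#(lattTriples (√2 * L) (2 * s * L) c (2 * ℓ * s * L * y)) : ℝ) *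
      (2 * (2 * ℓ * s * L * y) + 1) ≤
      900 * (ℓ * L ^ 2) * (1 + ℓ * y ^ 2 * s ^ 2 + ℓ * y ^ 2 * s ^ 2 * L
        + ℓ * y ^ 2 * s ^ 3 * L ^ 2) := by
  set T := 2 * ℓ * s * L * y
  have hs2 : √2 ≤ 3 / 2 := by
    rw [sqrt_le_left (by norm_num)]; norm_num
  have hL2 : 1 ≤ 2 * L := by nlinarith
  have hA : 2 * (√2 * L) + 1 ≤ 5 * L := by nlinarith [sqrt_nonneg 2]
  have hTT : (2 * T + 1) * (2 * T + 1) ≤ 8 * T ^ 2 + 2 := by nlinarith [sq_nonneg (2 * T - 1)]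
  have e₁ : s * L ^ 2 ≤ ℓ * L ^ 2 := by gcongr; linarith
  have e₂ : L ≤ 2 * ℓ * L ^ 2 := by nlinarith
  calc _ ≤ (2 * (√2 * L) + 1) * (2 * (2 * s * L) + 1) * (2 * T + 1) * (2 * T + 1) := by
        gcongr
        exact card_lattTriples_le (by positivity) (by positivity) (by positivity)
    _ = (2 * (√2 * L) + 1) * (2 * (2 * s * L) + 1) * ((2 * T + 1) * (2 * T + 1)) := by ring
    _ ≤ (5 * L) * (2 * (2 * s * L) + 1) * (8 * T ^ 2 + 2) := by gcongr
    _ ≤ _ := by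
      simp only [T]
      have h₁ : 0 ≤ ℓ ^ 2 * L ^ 2 * y ^ 2 * s ^ 2 := by positivity
      have h₂ : 0 ≤ ℓ ^ 2 * L ^ 3 * y ^ 2 * s ^ 2 := by positivity
      have h₃ : 0 ≤ ℓ ^ 2 * L ^ 4 * y ^ 2 * s ^ 3 := by positivity
      nlinarith

theorem rpow_half_le_of_le_two_mul_sq {m X ε : ℝ} (hm : 0 ≤ m) (hX : 0 ≤ X) (hε : 0 ≤ ε)
    (h : m ≤ 2 * X ^ 2) : m ^ (ε / 2) ≤ 2 ^ (ε / 2) * X ^ ε := by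
  calc m ^ (ε / 2) ≤ (2 * X ^ 2) ^ (ε / 2) := by gcongr
    _ = 2 ^ (ε / 2) * X ^ ε := by
      rw [mul_rpow zero_le_two (by positivity), ← rpow_natCast, ← rpow_mul hX]
      congr 2
      push_cast
      ring

theorem card_pairs_lattTriples_le {ε Cτ ℓ L x y s X : ℝ} (hε : 0 < ε) (hCτ0 : 0 ≤ Cτ)
    (hCτ : ∀ n : ℕ, n ≠ 0 → (#n.divisors : ℝ) ≤ Cτ * (n : ℝ) ^ (ε / 2))
    (hℓ : 1 ≤ ℓ) (hL : 0 < L) (hy : 0 ≤ y) (hs : 0 ≤ s) (hs1 : s ≤ 1) (hX : 1 ≤ X)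
    (hLX : L ≤ X) :
    let D' := {t ∈ lattTriples (√2 * L) (2 * s * L) (ℓ * x) (2 * ℓ * s * L * y) | t ≠ 0}
    (#{q ∈ D' ×ˢ D' | triDet q.1 = triDet q.2} : ℝ) ≤
      (3072 + 1800 * Cτ * 2 ^ (ε / 2)) * X ^ ε * (ℓ * L ^ 2) *
        (1 + ℓ * y ^ 2 * s ^ 2 + ℓ * y ^ 2 * s ^ 2 * L + ℓ * y ^ 2 * s ^ 3 * L ^ 2) := by
  intro D'
  set A := √2 * L
  set K := 2 * s * L
  set T := 2 * ℓ * s * L * y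
  set V := 1 + ℓ * y ^ 2 * s ^ 2 + ℓ * y ^ 2 * s ^ 2 * L + ℓ * y ^ 2 * s ^ 3 * L ^ 2
  have hT : 0 ≤ T := by positivity
  have hA : (A ^ 2) ^ (ε / 2) ≤ 2 ^ (ε / 2) * X ^ ε := by
    refine rpow_half_le_of_le_two_mul_sq (sq_nonneg A) (by positivity) hε.le ?_
    rw [mul_pow, sq_sqrt zero_le_two]
    gcongr
  obtain ⟨M, hM0, hM, hDM⟩ : ∃ M : ℝ, 0 ≤ M ∧
      (∀ t ∈ D', triDet t ≠ 0 → (#{t' ∈ D' | triDet t' = triDet t} : ℝ) ≤ M) ∧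
      #D' * M ≤ 1800 * Cτ * 2 ^ (ε / 2) * X ^ ε * (ℓ * L ^ 2 * V) := by
    rcases lt_or_ge (2 * L ^ 2) 1 with hsmall | hbig
    · have hA1 : A < 1 := by nlinarith [sq_sqrt (zero_le_two (α := ℝ))]
      refine ⟨0, le_rfl, fun t ht hF => ?_, by simp only [mul_zero]; positivity⟩
      exact absurd (triDet_eq_zero_of_mem_lattTriples hA1 (mem_filter.mp ht).1) hF
    refine ⟨2 * Cτ * (2 ^ (ε / 2) * X ^ ε) * (2 * T + 1), by positivity, fun t ht hF => ?_, ?_⟩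
    · refine (Nat.cast_le.mpr (Finset.card_le_card (filter_subset_filter _ (filter_subset _ _)))).trans
        ((card_lattTriples_filter_triDet_eq_le_rpow (by positivity) hCτ0 hCτ hT
          (mem_filter.mp ht).1 hF).trans (by gcongr))
    · have hD : (#D' : ℝ) * (2 * T + 1) ≤ 900 * (ℓ * L ^ 2) * V :=
        (mul_le_mul_of_nonneg_right (Nat.cast_le.mpr (Finset.card_le_card (filter_subset _ _)))
          (by positivity)).trans (card_lattTriples_mul_le hℓ hbig hL.le hy hs hs1)
      calc (#D' : ℝ) * (2 * Cτ * (2 ^ (ε / 2) * X ^ ε) * (2 * T + 1))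
          = 2 * Cτ * 2 ^ (ε / 2) * X ^ ε * (#D' * (2 * T + 1)) := by ring
        _ ≤ 2 * Cτ * 2 ^ (ε / 2) * X ^ ε * (900 * (ℓ * L ^ 2) * V) := by gcongr
        _ = _ := by ring
  have hZ : (#{t ∈ D' | triDet t = 0} : ℝ) ^ 2 ≤ 3072 * (ℓ * L ^ 2) * V := by
    rw [filter_filter]
    exact card_lattTriples_filter_triDet_eq_zero_sq_le hℓ hL.le hy hs hs1
  have hW : 0 ≤ ℓ * L ^ 2 * V := by positivity
  have hG : 1 ≤ X ^ ε := one_le_rpow hX hε.le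
  calc _ ≤ (#{t ∈ D' | triDet t = 0} : ℝ) ^ 2 + #D' * M := card_filter_pairs_eq_le D' triDet hM0 hM
    _ ≤ 3072 * (ℓ * L ^ 2) * V + 1800 * Cτ * 2 ^ (ε / 2) * X ^ ε * (ℓ * L ^ 2 * V) :=
        add_le_add hZ hDM
    _ ≤ _ := by nlinarith [mul_le_mul_of_nonneg_left hG hW]

theorem iwasawa_inv {x y : ℝ} (hy : 0 < y) :
    (!![√y, x / √y; 0, (√y)⁻¹] : M2)⁻¹ = !![(√y)⁻¹, -(x / √y); 0, √y] := by
  have hs : √y ≠ 0 := (sqrt_pos.mpr hy).ne'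
  refine inv_eq_left_inv ?_
  ext i j
  fin_cases i <;> fin_cases j <;> simp [mul_apply, Fin.sum_univ_two, hs]
  ring

theorem iwasawa_inv_mul_upper_mul {x y : ℝ} (hy : 0 < y) (a β d : ℝ) :
    (!![√y, x / √y; 0, (√y)⁻¹] : M2)⁻¹ * !![a, β; 0, d] * !![√y, x / √y; 0, (√y)⁻¹] =
      !![a, ((a - d) * x + β) / y; 0, d] := by
  have hs : √y ≠ 0 := (sqrt_pos.mpr hy).ne'
  have hsq : √y ^ 2 = y := sq_sqrt hy.le
  rw [iwasawa_inv hy]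
  ext i j
  fin_cases i <;> fin_cases j <;> simp [mul_apply, Fin.sum_univ_two] <;> field_simp
  linear_combination (x * d - a * x - β) * hsq

theorem sq_le_of_upper_mem_omegaSet {a β d δ L : ℝ} (h : !![a, β; 0, d] ∈ OmegaSet δ L) :
    a ^ 2 ≤ 2 * L ^ 2 ∧ d ^ 2 ≤ 2 * L ^ 2 ∧ (a - d) ^ 2 + β ^ 2 ≤ 4 * δ * L ^ 2 := by
  obtain ⟨hP, hPdet⟩ := h
  simp only [Pfun, det_fin_two_of, of_apply, cons_val', cons_val_zero, cons_val_one, empty_val',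
    cons_val_fin_one] at hP hPdet
  refine ⟨?_, ?_, ?_⟩ <;> nlinarith [sq_nonneg a, sq_nonneg β, sq_nonneg d]

def upperPoints (N ℓ : ℕ) (g : M2) (δ L : ℝ) : Set M2 :=
  {γ | γ ∈ Rlat N ℓ ∧ γ 1 0 = 0 ∧ g⁻¹ * γ * g ∈ OmegaStar δ L}

def triMat (ℓ : ℕ) (t : (ℤ × ℤ) × ℤ) : M2 := !![(t.1.1 : ℝ), t.2 / ℓ; 0, t.1.2]

theorem det_triMat (ℓ : ℕ) (t : (ℤ × ℤ) × ℤ) : (triMat ℓ t).det = triDet t := by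
  simp [triMat, triDet, det_fin_two_of]

theorem exists_triMat_eq {N ℓ : ℕ} {γ : M2} (hγ : γ ∈ Rlat N ℓ) (h10 : γ 1 0 = 0) :
    ∃ t, triMat ℓ t = γ := by
  obtain ⟨⟨a, ha⟩, ⟨b, hb⟩, -, ⟨d, hd⟩⟩ := hγ
  refine ⟨((a, d), b), ?_⟩
  ext i j
  fin_cases i <;> fin_cases j <;> simp [triMat, *]

theorem exists_mem_lattTriples_of_mem_upperPoints {N ℓ : ℕ} {δ L x y : ℝ} (hℓ : 0 < ℓ)
    (hδ : 0 ≤ δ) (hL : 0 ≤ L) (hy : 0 < y) {γ : M2}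
    (hγ : γ ∈ upperPoints N ℓ !![√y, x / √y; 0, (√y)⁻¹] δ L) :
    ∃ t ∈ lattTriples (√2 * L) (2 * √δ * L) (ℓ * x) (2 * ℓ * √δ * L * y),
      t ≠ 0 ∧ triMat ℓ t = γ := by
  obtain ⟨hR, h10, hΩ, hne⟩ := hγ
  obtain ⟨⟨⟨a, d⟩, b⟩, rfl⟩ := exists_triMat_eq hR h10
  rw [triMat, iwasawa_inv_mul_upper_mul hy] at hΩ hne
  set β := (((a : ℝ) - d) * x + b / ℓ) / y
  obtain ⟨ha, hd, hk⟩ := sq_le_of_upper_mem_omegaSet hΩ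
  have hℓ' : (0 : ℝ) < ℓ := Nat.cast_pos.mpr hℓ
  have hK : (2 * √δ * L) ^ 2 = 4 * δ * L ^ 2 := by rw [mul_pow, mul_pow, sq_sqrt hδ]; ring
  have hA : (√2 * L) ^ 2 = 2 * L ^ 2 := by rw [mul_pow, sq_sqrt zero_le_two]
  have hβ : |β| ≤ 2 * √δ * L := abs_le_of_sq_le_sq (by nlinarith) (by positivity)
  have hb : (b : ℝ) - ℓ * x * (d - a) = ℓ * y * β := by
    simp only [β]; field_simp; ring
  refine ⟨_, mem_lattTriples.mpr ⟨abs_le_of_sq_le_sq (by simpa [hA]) (by positivity),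
    abs_le_of_sq_le_sq (by simpa [hA]) (by positivity),
    abs_le_of_sq_le_sq (by nlinarith) (by positivity), ?_⟩, ?_, rfl⟩
  · rw [hb, abs_mul, abs_of_pos (by positivity)]
    calc ℓ * y * |β| ≤ ℓ * y * (2 * √δ * L) := by gcongr
      _ = 2 * ℓ * √δ * L * y := by ring
  · rintro h
    simp only [Prod.ext_iff, Prod.fst_zero, Prod.snd_zero] at h
    obtain ⟨⟨rfl, rfl⟩, rfl⟩ := h
    apply hne
    ext i j
    fin_cases i <;> fin_cases j <;> simp [β]

theorem setOf_pairs_eq (N ℓ : ℕ) (g : M2) (δ L : ℝ) :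
    {p : M2 × M2 | p.1 ∈ Rlat N ℓ ∧ p.2 ∈ Rlat N ℓ ∧ p.1 1 0 = 0 ∧ p.2 1 0 = 0 ∧
        g⁻¹ * p.1 * g ∈ OmegaStar δ L ∧ g⁻¹ * p.2 * g ∈ OmegaStar δ L ∧ p.1.det = p.2.det} =
      {p | p.1 ∈ upperPoints N ℓ g δ L ∧ p.2 ∈ upperPoints N ℓ g δ L ∧ p.1.det = p.2.det} := by
  ext p
  simp only [upperPoints, Set.mem_ofPred_eq]
  tauto

theorem pairs_upperPoints_subset_image {N ℓ : ℕ} {δ L x y : ℝ} (hℓ : 0 < ℓ) (hδ : 0 ≤ δ)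
    (hL : 0 ≤ L) (hy : 0 < y) :
    let D' := {t ∈ lattTriples (√2 * L) (2 * √δ * L) (ℓ * x) (2 * ℓ * √δ * L * y) | t ≠ 0}
    {p : M2 × M2 | p.1 ∈ upperPoints N ℓ !![√y, x / √y; 0, (√y)⁻¹] δ L ∧
        p.2 ∈ upperPoints N ℓ !![√y, x / √y; 0, (√y)⁻¹] δ L ∧ p.1.det = p.2.det} ⊆
      (fun q : ((ℤ × ℤ) × ℤ) × (ℤ × ℤ) × ℤ => (triMat ℓ q.1, triMat ℓ q.2)) ''
        ↑{q ∈ D' ×ˢ D' | triDet q.1 = triDet q.2} := by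
  rintro D' ⟨γ₁, γ₂⟩ ⟨h₁, h₂, hdet⟩
  obtain ⟨t₁, ht₁, hne₁, rfl⟩ := exists_mem_lattTriples_of_mem_upperPoints hℓ hδ hL hy h₁
  obtain ⟨t₂, ht₂, hne₂, rfl⟩ := exists_mem_lattTriples_of_mem_upperPoints hℓ hδ hL hy h₂
  rw [det_triMat, det_triMat] at hdet
  refine ⟨(t₁, t₂), ?_, rfl⟩
  simp only [D', coe_filter, Finset.mem_product, Finset.mem_filter]
  exact ⟨⟨⟨ht₁, hne₁⟩, ht₂, hne₂⟩, by exact_mod_cast hdet⟩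

/-- Second-moment count of pairs of upper-triangular matrices of R(ℓ) whose conjugates
    by g lie in Ω⋆(δ,L). -/
theorem stmt7 (ε : ℝ) (hε : 0 < ε) : ∃ C : ℝ, 0 < C ∧
    ∀ (N ℓ : ℕ) (δ L x y : ℝ), Squarefree N → 0 < N → 0 < ℓ → ℓ ∣ N →
    0 < δ → δ ≤ 1 → 0 < L → 0 < y →
    (∀ σ ∈ AtkinLehner N, (moebius σ (x + y * Complex.I)).im ≤ y) →
    ∀ g : M2, g = !![Real.sqrt y, x / Real.sqrt y; 0, (Real.sqrt y)⁻¹] →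
    {p : M2 × M2 | p.1 ∈ Rlat N ℓ ∧ p.2 ∈ Rlat N ℓ ∧ p.1 1 0 = 0 ∧ p.2 1 0 = 0 ∧
        g⁻¹ * p.1 * g ∈ OmegaStar δ L ∧ g⁻¹ * p.2 * g ∈ OmegaStar δ L ∧
        p.1.det = p.2.det}.Finite ∧
    (({p : M2 × M2 | p.1 ∈ Rlat N ℓ ∧ p.2 ∈ Rlat N ℓ ∧ p.1 1 0 = 0 ∧ p.2 1 0 = 0 ∧
        g⁻¹ * p.1 * g ∈ OmegaStar δ L ∧ g⁻¹ * p.2 * g ∈ OmegaStar δ L ∧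
        p.1.det = p.2.det}.ncard : ℝ) ≤
      C * ((N : ℝ) * (1 + L)) ^ ε * ((ℓ : ℝ) * L ^ 2) *
        (1 + (ℓ : ℝ) * y ^ 2 * δ + (ℓ : ℝ) * y ^ 2 * δ * L
          + (ℓ : ℝ) * y ^ 2 * δ ^ ((3 : ℝ) / 2) * L ^ 2)) := by
  obtain ⟨Cτ, hCτ0, hCτ⟩ := exists_card_divisors_le_mul_rpow (half_pos hε)
  refine ⟨3072 + 1800 * Cτ * 2 ^ (ε / 2), by positivity, ?_⟩
  rintro N ℓ δ L x y - hN hℓ - hδ hδ1 hL hy - g rfl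
  have hsub := pairs_upperPoints_subset_image (N := N) (x := x) hℓ hδ.le hL.le hy
  rw [setOf_pairs_eq]
  refine ⟨((finite_toSet _).image _).subset hsub, ?_⟩
  have hN1 : (1 : ℝ) ≤ N := Nat.one_le_cast.mpr hN
  have hδ32 : δ ^ ((3 : ℝ) / 2) = √δ ^ 3 := by
    rw [sqrt_eq_rpow, ← rpow_natCast, ← rpow_mul hδ.le]
    norm_num
  have hV : 1 + ℓ * y ^ 2 * δ + ℓ * y ^ 2 * δ * L + ℓ * y ^ 2 * δ ^ ((3 : ℝ) / 2) * L ^ 2 =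
      1 + ℓ * y ^ 2 * √δ ^ 2 + ℓ * y ^ 2 * √δ ^ 2 * L + ℓ * y ^ 2 * √δ ^ 3 * L ^ 2 := by
    rw [hδ32, sq_sqrt hδ.le]
  rw [hV]
  refine (Nat.cast_le.mpr (((ncard_le_ncard hsub).trans ncard_image_le).trans
    (ncard_coe_finset _).le)).trans ?_
  exact card_pairs_lattTriples_le hε hCτ0 hCτ (Nat.one_le_cast.mpr hℓ) hL hy.le (sqrt_nonneg δ)
    (sqrt_le_one.mpr hδ1) (by nlinarith) (by nlinarith)
end
end

section
/- Fix t ∈ ℝ and α ∈ [0, π/2). The function h(τ) = cosh(α·t)·2·√τ·K_{it}(2πτ) is twice differentiable on (0, ∞) and satisfies the differential equation h''(τ) + ( −4π² + (1/4 + t²)/τ² )·h(τ) = 0 for every τ > 0. -/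
open MeasureTheory Real Set

noncomputable section

/-- The modified Bessel function of imaginary order:
    K_{it}(x) = ∫₀^∞ e^{−x cosh u} cos(tu) du. -/
def Kit (t x : ℝ) : ℝ :=
  ∫ u in Set.Ioi (0 : ℝ), Real.exp (-x * Real.cosh u) * Real.cos (t * u)

/-!
Differentiating under the integral sign, `K_{it}' = -∫ e^{-x cosh u} cosh u cos(tu) du` and
`K_{it}'' = ∫ e^{-x cosh u} cosh² u cos(tu) du`. The function
`g(u) = e^{-x cosh u} (x sinh u cos(tu) - t sin(tu))` vanishes at `0` and at `∞`, and its derivative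
is `-(x² cosh² u - x cosh u - (x² - t²)) e^{-x cosh u} cos(tu)`; integrating it over `(0, ∞)` gives
the modified Bessel equation `x² K'' + x K' - (x² - t²) K = 0`. The substitution
`h(τ) = c √τ K(aτ)` turns any solution of this equation into a solution of
`h'' + (-a² + (1/4 + t²)/τ²) h = 0`.
-/

open scoped Nat

lemma pow_mul_exp_neg_two_mul_le {b y : ℝ} (hb : 0 < b) (hy : 0 ≤ y) (k : ℕ) :
    y ^ k * exp (-(2 * b) * y) ≤ k ! / b ^ k * exp (-b * y) := by
  have hexp : (b * y) ^ k / k ! ≤ exp (b * y) := pow_div_factorial_le_exp _ (by positivity) k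
  have hyk : y ^ k ≤ k ! / b ^ k * exp (b * y) := by
    rw [mul_pow, div_le_iff₀ (by positivity)] at hexp
    rw [div_mul_eq_mul_div, le_div_iff₀ (by positivity)]
    linarith
  calc y ^ k * exp (-(2 * b) * y) ≤ k ! / b ^ k * exp (b * y) * exp (-(2 * b) * y) := by
        gcongr
    _ = k ! / b ^ k * exp (-b * y) := by rw [mul_assoc, ← exp_add]; ring_nf

lemma integrableOn_exp_neg_mul_cosh_mul {w : ℝ → ℝ} {C : ℝ} {k : ℕ} (hw : Continuous w)
    (hwC : ∀ u, |w u| ≤ C * cosh u ^ k) {x : ℝ} (hx : 0 < x) :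
    IntegrableOn (fun u => exp (-x * cosh u) * w u) (Ioi 0) := by
  have hdom : IntegrableOn (fun u => C * (k ! / (x / 2) ^ k) * exp (-(x / 2) * u)) (Ioi 0) :=
    (exp_neg_integrableOn_Ioi 0 (half_pos hx)).const_mul _
  refine hdom.mono' (by fun_prop) ((ae_restrict_mem measurableSet_Ioi).mono fun u (hu : 0 < u) => ?_)
  have hu_le : u ≤ cosh u := ((self_lt_sinh_iff.2 hu).trans (sinh_lt_cosh u)).le
  have hC : 0 ≤ C :=
    (mul_nonneg_iff_of_pos_right (pow_pos (cosh_pos u) k)).1 ((abs_nonneg _).trans (hwC u))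
  calc ‖exp (-x * cosh u) * w u‖ ≤ C * (cosh u ^ k * exp (-(2 * (x / 2)) * cosh u)) := by
        rw [norm_mul, norm_of_nonneg (exp_pos _).le, Real.norm_eq_abs]
        ring_nf
        nlinarith [hwC u, exp_pos (-(x * cosh u))]
    _ ≤ C * (k ! / (x / 2) ^ k * exp (-(x / 2) * cosh u)) :=
        mul_le_mul_of_nonneg_left (pow_mul_exp_neg_two_mul_le (half_pos hx) (cosh_pos u).le k) hC
    _ ≤ C * (k ! / (x / 2) ^ k) * exp (-(x / 2) * u) := by
        rw [← mul_assoc]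
        exact mul_le_mul_of_nonneg_left (exp_le_exp.2 (by nlinarith)) (by positivity)

def coshLaplace (w : ℝ → ℝ) (x : ℝ) : ℝ :=
  ∫ u in Ioi 0, exp (-x * cosh u) * w u

section coshLaplace

variable {w : ℝ → ℝ} {C : ℝ} {k : ℕ}

lemma abs_cosh_mul_le (hwC : ∀ u, |w u| ≤ C * cosh u ^ k) (u : ℝ) :
    |cosh u * w u| ≤ C * cosh u ^ (k + 1) := by
  rw [abs_mul, abs_of_pos (cosh_pos u), pow_succ]
  nlinarith [hwC u, cosh_pos u]

lemma hasDerivAt_coshLaplace (hw : Continuous w) (hwC : ∀ u, |w u| ≤ C * cosh u ^ k)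
    {x : ℝ} (hx : 0 < x) :
    HasDerivAt (coshLaplace w) (-coshLaplace (fun u => cosh u * w u) x) x := by
  have hball : Metric.ball x (x / 2) ⊆ Ici (x / 2) := fun y hy => by
    rw [Metric.mem_ball, Real.dist_eq, abs_lt] at hy
    exact mem_Ici.2 (by linarith)
  have hderiv := hasDerivAt_integral_of_dominated_loc_of_deriv_le
    (μ := volume.restrict (Ioi 0)) (Metric.ball_mem_nhds x (half_pos hx))
    (F := fun y u => exp (-y * cosh u) * w u)
    (F' := fun y u => -(exp (-y * cosh u) * (cosh u * w u)))
    (bound := fun u => exp (-(x / 2) * cosh u) * |cosh u * w u|)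
    (.of_forall fun _ => by fun_prop) (integrableOn_exp_neg_mul_cosh_mul hw hwC hx)
    (by fun_prop)
    (.of_forall fun u y hy => by
      rw [norm_neg, norm_mul, norm_of_nonneg (exp_pos _).le, Real.norm_eq_abs]
      have : x / 2 ≤ y := hball hy
      gcongr)
    (integrableOn_exp_neg_mul_cosh_mul (by fun_prop)
      (fun u => (abs_abs (cosh u * w u)).trans_le (abs_cosh_mul_le hwC u)) (half_pos hx))
    (.of_forall fun u y _ => by
      simpa [mul_comm, mul_left_comm, mul_assoc] using
        (((hasDerivAt_id y).neg.mul_const (cosh u)).exp.mul_const (w u)))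
  rw [coshLaplace, ← integral_neg]
  exact hderiv.2

end coshLaplace

lemma Kit_eq_coshLaplace (t : ℝ) : Kit t = coshLaplace fun u => cos (t * u) := rfl

lemma abs_mul_sinh_mul_cos_sub_mul_sin_le (x t u : ℝ) (hx : 0 ≤ x) :
    |x * sinh u * cos (t * u) - t * sin (t * u)| ≤ (x + |t|) * cosh u ^ 1 := by
  have hsinh : |sinh u| ≤ cosh u := by
    rw [abs_le]; constructor <;> nlinarith [sinh_lt_cosh u, cosh_add_sinh u, exp_pos u]
  have hsin := abs_sin_le_one (t * u)
  calc |x * sinh u * cos (t * u) - t * sin (t * u)|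
      ≤ x * |sinh u| * |cos (t * u)| + |t| * |sin (t * u)| := by
        refine (abs_sub _ _).trans_eq ?_
        rw [abs_mul, abs_mul, abs_mul, abs_of_nonneg hx]
    _ ≤ x * cosh u * 1 + |t| * cosh u := by
        gcongr
        · exact abs_cos_le_one _
        · exact hsin.trans (one_le_cosh u)
    _ = (x + |t|) * cosh u ^ 1 := by ring

lemma abs_cos_mul_le_cosh_pow_zero (t u : ℝ) : |cos (t * u)| ≤ 1 * cosh u ^ 0 := by
  simpa using abs_cos_le_one (t * u)

theorem Kit_bessel_ode (t : ℝ) {x : ℝ} (hx : 0 < x) :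
    x ^ 2 * coshLaplace (fun u => cosh u * (cosh u * cos (t * u))) x
      + x * -coshLaplace (fun u => cosh u * cos (t * u)) x - (x ^ 2 - t ^ 2) * Kit t x = 0 := by
  have hcos := abs_cos_mul_le_cosh_pow_zero t
  have hint₀ := integrableOn_exp_neg_mul_cosh_mul (by fun_prop) hcos hx
  have hint₁ := integrableOn_exp_neg_mul_cosh_mul (by fun_prop) (abs_cosh_mul_le hcos) hx
  have hint₂ := integrableOn_exp_neg_mul_cosh_mul (by fun_prop)
    (abs_cosh_mul_le (abs_cosh_mul_le hcos)) hx
  set g : ℝ → ℝ := fun u => exp (-x * cosh u) * (x * sinh u * cos (t * u) - t * sin (t * u))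
  set g' : ℝ → ℝ := fun u => x * (exp (-x * cosh u) * (cosh u * cos (t * u)))
    - x ^ 2 * (exp (-x * cosh u) * (cosh u * (cosh u * cos (t * u))))
    + (x ^ 2 - t ^ 2) * (exp (-x * cosh u) * cos (t * u))
  have hg : ∀ u, HasDerivAt g (g' u) u := fun u => by
    have := ((hasDerivAt_cosh u).const_mul (-x)).exp.mul
      ((((hasDerivAt_sinh u).const_mul x).mul ((hasDerivAt_id u).const_mul t).cos).sub
        (((hasDerivAt_id u).const_mul t).sin.const_mul t))
    refine this.congr_deriv ?_
    simp only [g', id, Pi.mul_apply, Pi.sub_apply]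
    linear_combination (-x ^ 2 * exp (-x * cosh u) * cos (t * u)) * sinh_sq u
  have hg'_int : IntegrableOn g' (Ioi 0) :=
    ((hint₁.const_mul x).sub (hint₂.const_mul (x ^ 2))).add (hint₀.const_mul (x ^ 2 - t ^ 2))
  have hg_int : IntegrableOn g (Ioi 0) := integrableOn_exp_neg_mul_cosh_mul (by fun_prop)
    (abs_mul_sinh_mul_cos_sub_mul_sin_le x t · hx.le) hx
  have hg_lim := tendsto_zero_of_hasDerivAt_of_integrableOn_Ioi (fun u _ => hg u) hg'_int hg_int
  have hFTC := integral_Ioi_of_hasDerivAt_of_tendsto' (fun u _ => hg u) hg'_int hg_lim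
  have hlin : ∫ u in Ioi 0, g' u = x * coshLaplace (fun u => cosh u * cos (t * u)) x
      - x ^ 2 * coshLaplace (fun u => cosh u * (cosh u * cos (t * u))) x
      + (x ^ 2 - t ^ 2) * Kit t x := by
    simp only [g']
    rw [integral_add ?_ (hint₀.const_mul _), integral_sub (hint₁.const_mul x)
      (hint₂.const_mul _), integral_const_mul, integral_const_mul, integral_const_mul]
    · rfl
    · exact (hint₁.const_mul x).sub (hint₂.const_mul _)
  simp only [g, sinh_zero, mul_zero, zero_mul, sin_zero, sub_zero] at hFTC
  linarith

lemma HasDerivAt.comp_const_mul {F : ℝ → ℝ} {F' a σ : ℝ} (hF : HasDerivAt F F' (a * σ)) :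
    HasDerivAt (fun σ => F (a * σ)) (a * F') σ :=
  (hF.comp σ ((hasDerivAt_id σ).const_mul a)).congr_deriv (by ring)

theorem sqrt_mul_comp_const_mul_of_bessel_ode {f f' f'' : ℝ → ℝ} {a μ c : ℝ} (ha : 0 < a)
    (hf : ∀ x, 0 < x → HasDerivAt f (f' x) x) (hf' : ∀ x, 0 < x → HasDerivAt f' (f'' x) x)
    (hode : ∀ x, 0 < x → x ^ 2 * f'' x + x * f' x - (x ^ 2 - μ) * f x = 0)
    (h : ℝ → ℝ) (hh : h = fun τ => c * √τ * f (a * τ)) (τ : ℝ) (hτ : 0 < τ) :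
    DifferentiableAt ℝ h τ ∧ DifferentiableAt ℝ (deriv h) τ ∧
      deriv (deriv h) τ + (-a ^ 2 + (1 / 4 + μ) / τ ^ 2) * h τ = 0 := by
  set h' : ℝ → ℝ := fun σ => c * ((2 * √σ)⁻¹ * f (a * σ) + √σ * (a * f' (a * σ)))
  have hh' : ∀ σ, 0 < σ → HasDerivAt h (h' σ) σ := fun σ hσ => by
    subst hh
    have := ((hasDerivAt_sqrt hσ.ne').const_mul c).mul (hf _ (by positivity)).comp_const_mul
    refine this.congr_deriv ?_
    simp only [h']
    field_simp
  have hh'' : HasDerivAt h' (c * (-(4 * τ * √τ)⁻¹ * f (a * τ) + a / √τ * f' (a * τ)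
      + a ^ 2 * √τ * f'' (a * τ))) τ := by
    have hs := hasDerivAt_sqrt hτ.ne'
    have := (((hs.const_mul 2).inv (by positivity)).mul (hf _ (by positivity)).comp_const_mul).add
      (hs.mul ((hf' _ (by positivity)).comp_const_mul.const_mul a))
    refine (this.const_mul c).congr_deriv ?_
    have : √τ ^ 2 = τ := sq_sqrt hτ.le
    simp only [Pi.inv_apply]
    field_simp
    rw [this]
    ring
  have hderiv2 : HasDerivAt (deriv h) _ τ :=
    hh''.congr_of_eventuallyEq (eventually_gt_nhds hτ |>.mono fun σ hσ => (hh' σ hσ).deriv)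
  refine ⟨(hh' τ hτ).differentiableAt, hderiv2.differentiableAt, ?_⟩
  rw [hderiv2.deriv, hh]
  obtain ⟨s, hs, rfl⟩ : ∃ s, 0 < s ∧ τ = s ^ 2 := ⟨√τ, by positivity, (sq_sqrt hτ.le).symm⟩
  have hode' := hode (a * s ^ 2) (by positivity)
  beta_reduce
  rw [sqrt_sq hs.le]
  generalize f (a * s ^ 2) = y at hode' ⊢
  generalize f' (a * s ^ 2) = y' at hode' ⊢
  generalize f'' (a * s ^ 2) = y'' at hode' ⊢
  field_simp
  linear_combination (4 * c) * hode'

theorem stmt16_general (t α : ℝ)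
    (h : ℝ → ℝ) (hdef : h = fun τ => Real.cosh (α * t) * 2 * Real.sqrt τ * Kit t (2 * π * τ)) :
    ∀ τ : ℝ, 0 < τ →
      DifferentiableAt ℝ h τ ∧ DifferentiableAt ℝ (deriv h) τ ∧
      deriv (deriv h) τ + (-4 * π ^ 2 + (1 / 4 + t ^ 2) / τ ^ 2) * h τ = 0 := by
  intro τ hτ
  have hcos := abs_cos_mul_le_cosh_pow_zero t
  have hode := sqrt_mul_comp_const_mul_of_bessel_ode (f := Kit t) (μ := t ^ 2) (by positivity : 0 < 2 * π)
    (fun x hx => Kit_eq_coshLaplace t ▸ hasDerivAt_coshLaplace (by fun_prop) hcos hx)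
    (fun x hx => (hasDerivAt_coshLaplace (by fun_prop) (abs_cosh_mul_le hcos) hx).neg.congr_deriv
      (neg_neg _))
    (fun x hx => Kit_bessel_ode t hx) h hdef τ hτ
  rwa [mul_pow, show (2 : ℝ) ^ 2 = 4 by norm_num, ← neg_mul] at hode

/-- h(τ) = cosh(αt)·2√τ·K_{it}(2πτ) satisfies h'' + (−4π² + (1/4+t²)/τ²)h = 0 on (0,∞). -/
theorem stmt16 (t α : ℝ) (hα0 : 0 ≤ α) (hα : α < π / 2)
    (h : ℝ → ℝ) (hdef : h = fun τ => Real.cosh (α * t) * 2 * Real.sqrt τ * Kit t (2 * π * τ)) :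
    ∀ τ : ℝ, 0 < τ →
      DifferentiableAt ℝ h τ ∧ DifferentiableAt ℝ (deriv h) τ ∧
      deriv (deriv h) τ + (-4 * π ^ 2 + (1 / 4 + t ^ 2) / τ ^ 2) * h τ = 0 :=
  stmt16_general t α h hdef
end
end
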